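/- arXiv:cs/0612036 — 3 statements merged into one kernel-verified Lean document; each statement's English description precedes it below -/
import Mathlib

section
/- The optimal value of the problem: maximize k subject to k ≤ (α+β)√γ, k ≤ (β+γ)√α, k ≤ (γ+α)√β, and α+β+γ ≤ 2 over nonnegative reals α, β, γ, is k = √(32/27), attained at α = β = γ = 2/3. -/
/-!
Only the first constraint and the budget are needed for the upper bound: they give
`k ≤ (α + β) √γ ≤ (2 - γ) √γ`, and `t ↦ (2 - t) √t` peaks at `t = 2/3` with value `√(32/27)`.
The symmetric point `α = β = γ = 2/3` meets all three constraints with equality.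
-/

open Real

lemma sub_mul_sqrt_le_of_nonneg {s t : ℝ} (hs : 0 ≤ s) (ht : 0 ≤ t) :
    (s - t) * √t ≤ 2 * s / 3 * √(s / 3) := by
  set u := √t
  set c := √(s / 3)
  have hu : u ^ 2 = t := sq_sqrt ht
  have hc : c ^ 2 = s / 3 := sq_sqrt (by positivity)
  have hfactor : 2 * s / 3 * c - (s - t) * u = (u - c) ^ 2 * (u + 2 * c) := by
    rw [← hu]
    linear_combination (3 * u - 2 * c) * hc
  have : 0 ≤ (u - c) ^ 2 * (u + 2 * c) := by positivity
  linarith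

lemma sqrt_32_div_27_eq : √(32 / 27) = (2 / 3 + 2 / 3) * √(2 / 3) := by
  rw [show (32 / 27 : ℝ) = (4 / 3) ^ 2 * (2 / 3) by norm_num, sqrt_mul (by positivity),
    sqrt_sq (by norm_num)]
  norm_num

/-- The optimal value of: maximize `k` subject to `k ≤ (α+β)√γ`,
`k ≤ (β+γ)√α`, `k ≤ (γ+α)√β`, `α+β+γ ≤ 2` over nonnegative reals `α β γ`, is
`k = √(32/27)`, attained at `α = β = γ = 2/3`. -/
theorem stmt_2 :
    IsGreatest {k : ℝ | ∃ α β γ : ℝ, 0 ≤ α ∧ 0 ≤ β ∧ 0 ≤ γ ∧ α + β + γ ≤ 2 ∧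
        k ≤ (α + β) * Real.sqrt γ ∧ k ≤ (β + γ) * Real.sqrt α ∧ k ≤ (γ + α) * Real.sqrt β}
      (Real.sqrt (32 / 27)) ∧
    Real.sqrt (32 / 27) = (2 / 3 + 2 / 3) * Real.sqrt (2 / 3) := by
  refine ⟨⟨⟨2 / 3, 2 / 3, 2 / 3, by norm_num, by norm_num, by norm_num, by norm_num,
      sqrt_32_div_27_eq.le, sqrt_32_div_27_eq.le, sqrt_32_div_27_eq.le⟩, ?_⟩, sqrt_32_div_27_eq⟩
  rintro k ⟨α, β, γ, -, -, hγ, hbudget, hk, -, -⟩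
  calc k ≤ (α + β) * √γ := hk
    _ ≤ (2 - γ) * √γ := mul_le_mul_of_nonneg_right (by linarith) (sqrt_nonneg γ)
    _ ≤ 2 * 2 / 3 * √(2 / 3) := sub_mul_sqrt_le_of_nonneg zero_le_two hγ
    _ = √(32 / 27) := by rw [sqrt_32_div_27_eq]; norm_num
end

section
/- For any algorithm multiplying matrices in the standard way with worker memory of m blocks, the communication-to-computation ratio (in blocks) is at least √(27/(8m)); formally, if during every window of m communication steps at most √(N_A N_B N_C) ≤ √((2m/3)³) block updates can be performed, then the ratio m/K of communications to computations satisfies m/K ≥ √(27/(8m)). -/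
lemma sqrt_div_eq_div_sqrt_cube {m : ℝ} (hm : 0 < m) :
    Real.sqrt (27 / (8 * m)) = m / Real.sqrt ((2 * m / 3) ^ 3) := by
  rw [eq_div_iff (Real.sqrt_pos.mpr (by positivity)).ne', ← Real.sqrt_mul (by positivity)]
  have hsq : 27 / (8 * m) * (2 * m / 3) ^ 3 = m ^ 2 := by field_simp; ring
  rw [hsq, Real.sqrt_sq hm.le]

/-- If during every window of `m` communication steps at most
`K ≤ √(N_A N_B N_C) ≤ √((2m/3)³)` block updates can be performed, then the
communication-to-computation ratio `m/K` satisfies `m/K ≥ √(27/(8m))`. -/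
theorem stmt_4 (m K : ℝ) (hm : 0 < m) (hK : 0 < K)
    (hbound : K ≤ Real.sqrt ((2 * m / 3) ^ 3)) :
    m / K ≥ Real.sqrt (27 / (8 * m)) :=
  calc Real.sqrt (27 / (8 * m)) = m / Real.sqrt ((2 * m / 3) ^ 3) := sqrt_div_eq_div_sqrt_cube hm
    _ ≤ m / K := by gcongr
end

section
/- The maximum re-use algorithm with parameter μ performs 2μ² + 2μt communications and μ²t block computations per outer iteration, so its communication-to-computation ratio equals 2/t + 2/μ, and as t → ∞ this ratio tends to 2/√m when μ = √m; moreover 2/√m = √(4/m) ≥ √(27/(8m)), i.e., the algorithm's asymptotic ratio exceeds the lower bound by a factor of exactly √(32/27). -/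
open Filter Topology

theorem div_sq_mul_eq_div_add_div {K : Type*} [Field K] (a b : K) {μ t : K}
    (hμ : μ ≠ 0) (ht : t ≠ 0) :
    (a * μ ^ 2 + b * μ * t) / (μ ^ 2 * t) = a / t + b / μ := by
  field_simp

theorem tendsto_const_div_add_const_atTop {𝕜 : Type*} [Field 𝕜] [LinearOrder 𝕜]
    [IsStrictOrderedRing 𝕜] [TopologicalSpace 𝕜] [OrderTopology 𝕜] (c d : 𝕜) :
    Tendsto (fun t : 𝕜 => c / t + d) atTop (𝓝 d) := by
  simpa using (tendsto_id.const_div_atTop c).add_const d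

namespace Real

theorem div_sqrt_eq_sqrt_sq_div {a : ℝ} (ha : 0 ≤ a) (m : ℝ) : a / √m = √(a ^ 2 / m) := by
  rw [sqrt_div (sq_nonneg a), sqrt_sq ha]

theorem sqrt_four_div_eq_mul_sqrt (m : ℝ) : √(4 / m) = √(32 / 27) * √(27 / (8 * m)) := by
  rw [← sqrt_mul (by norm_num)]
  ring_nf

theorem sqrt_twentyseven_div_le_sqrt_four_div (m : ℝ) : √(27 / (8 * m)) ≤ √(4 / m) := by
  rw [sqrt_four_div_eq_mul_sqrt]
  exact le_mul_of_one_le_left (sqrt_nonneg _) (one_le_sqrt.2 (by norm_num))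

end Real

theorem stmt_5_general (m : ℝ) :
    (∀ μ t : ℝ, 0 < μ → 0 < t →
      (2 * μ ^ 2 + 2 * μ * t) / (μ ^ 2 * t) = 2 / t + 2 / μ) ∧
    Tendsto (fun t : ℝ => 2 / t + 2 / Real.sqrt m) atTop (nhds (2 / Real.sqrt m)) ∧
    2 / Real.sqrt m = Real.sqrt (4 / m) ∧
    Real.sqrt (4 / m) ≥ Real.sqrt (27 / (8 * m)) ∧
    2 / Real.sqrt m = Real.sqrt (32 / 27) * Real.sqrt (27 / (8 * m)) := by
  have h_four : 2 / Real.sqrt m = Real.sqrt (4 / m) := by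
    rw [Real.div_sqrt_eq_sqrt_sq_div zero_le_two]
    norm_num
  refine ⟨fun μ t hμ ht => div_sq_mul_eq_div_add_div 2 2 hμ.ne' ht.ne',
    tendsto_const_div_add_const_atTop 2 _, h_four,
    Real.sqrt_twentyseven_div_le_sqrt_four_div m, ?_⟩
  rw [h_four, Real.sqrt_four_div_eq_mul_sqrt]

/-- The maximum re-use algorithm with parameter `μ` performs `2μ² + 2μt`
communications and `μ²t` computations per outer iteration, so its ratio is `2/t + 2/μ`;
as `t → ∞` with `μ = √m` this tends to `2/√m`; moreover `2/√m = √(4/m) ≥ √(27/(8m))`,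
exceeding the lower bound by the factor `√(32/27)` exactly. -/
theorem stmt_5 (m : ℝ) (hm : 0 < m) :
    (∀ μ t : ℝ, 0 < μ → 0 < t →
      (2 * μ ^ 2 + 2 * μ * t) / (μ ^ 2 * t) = 2 / t + 2 / μ) ∧
    Tendsto (fun t : ℝ => 2 / t + 2 / Real.sqrt m) atTop (nhds (2 / Real.sqrt m)) ∧
    2 / Real.sqrt m = Real.sqrt (4 / m) ∧
    Real.sqrt (4 / m) ≥ Real.sqrt (27 / (8 * m)) ∧
    2 / Real.sqrt m = Real.sqrt (32 / 27) * Real.sqrt (27 / (8 * m)) :=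
  stmt_5_general m
end
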